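/- Let x(r,s) = ∑_{(b_j) ∈ S(r,s)} (x⊗1)^{(b_0)}(x⊗t)^{(b_1)}⋯(x⊗t^s)^{(b_s)} in U(g[t]) for x ∈ g nilpotent (or in the symmetric algebra of the abelian Lie algebra ℂx ⊗ ℂ[t]). Then for r,s,k ∈ ℤ_{>0} and K ∈ ℤ_{≥0} with r+s ≥ kr+K: x(r,s) = _k x(r,s) + ∑_{(r',s')} x(r−r', s−s')_k · _k x(r',s'), where the sum is over pairs r',s' ∈ ℤ_{≥0} with r' < r, s' ≤ s, and r'+s' ≥ kr'+K, x(a,b)_k uses only summands with b_j = 0 for j ≥ k, and _k x(a,b) uses only summands with b_j = 0 for j < k. -/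
import Mathlib


open MvPolynomial

/-- The Chari–Venkatesh element `x(r,s)` (with support restricted by `pred`), in the
commutative case: `∑_{(b_j)} ∏_j x_j^{b_j}/b_j!`, summed over sequences `(b_j)_{j≥0}` of
nonnegative integers with `∑ b_j = r`, `∑ j·b_j = s` and `b_j = 0` whenever `¬ pred j`
(such sequences necessarily satisfy `b_j ≤ r` and `b_j = 0` for `j > s`).  Thus
`cvx r s (fun _ => True)` is `x(r,s)`, `cvx r s (· < k)` is `x(r,s)_k`, and
`cvx r s (k ≤ ·)` is `ₖx(r,s)`. -/

noncomputable def cvterm (f : ℕ →₀ ℕ) : MvPolynomial ℕ ℚ :=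
  (∏ j ∈ f.support, ((f j).factorial : ℚ))⁻¹ • ∏ j ∈ f.support, (X j : MvPolynomial ℕ ℚ) ^ f j

def cvcarr (r s : ℕ) (pred : ℕ → Prop) [DecidablePred pred] : Finset (ℕ →₀ ℕ) :=
  Finset.filter
    (fun f => (f.sum fun j n => j * n) = s ∧ ∀ j ∈ Finset.range (s+1), ¬ pred j → f j = 0)
    ((Finset.range (s+1)).finsuppAntidiag r)

lemma mem_cvcarr {r s : ℕ} {pred : ℕ → Prop} [DecidablePred pred] {f : ℕ →₀ ℕ} :
    f ∈ cvcarr r s pred ↔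
      (f.sum fun _ n => n) = r ∧ (f.sum fun j n => j * n) = s ∧ ∀ j, ¬ pred j → f j = 0 := by
  unfold cvcarr
  rw [Finset.mem_filter, Finset.mem_finsuppAntidiag]
  constructor
  · rintro ⟨⟨h1, h2⟩, h3, h4⟩
    refine ⟨?_, h3, fun j hj => ?_⟩
    · rw [Finsupp.sum_of_support_subset f h2 _ (fun _ _ => rfl)]
      exact h1
    · by_cases hjr : j ∈ Finset.range (s+1)
      · exact h4 j hjr hj
      · by_contra hne
        exact hjr (h2 (Finsupp.mem_support_iff.2 hne))
  · rintro ⟨h1, h3, h4⟩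
    have hsupp : f.support ⊆ Finset.range (s+1) := by
      intro j hj
      rw [Finset.mem_range]
      have hj1 : 1 ≤ f j := Nat.one_le_iff_ne_zero.2 (Finsupp.mem_support_iff.1 hj)
      have h2 : j * f j ≤ s := by
        rw [← h3, Finsupp.sum]
        exact Finset.single_le_sum (f := fun j => j * f j) (fun i _ => Nat.zero_le _) hj
      have := Nat.le_mul_of_pos_right j hj1
      omega
    refine ⟨⟨?_, hsupp⟩, h3, fun j _ => h4 j⟩
    rw [← h1, Finsupp.sum_of_support_subset f hsupp _ (fun _ _ => rfl)]

lemma cvcarr_support_subset {r s : ℕ} {pred : ℕ → Prop} [DecidablePred pred] {f : ℕ →₀ ℕ}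
    (hf : f ∈ cvcarr r s pred) : f.support ⊆ Finset.range (s+1) :=
  (Finset.mem_finsuppAntidiag.1 (Finset.mem_filter.1 hf).1).2

lemma cvcarr_apply_le {r s : ℕ} {pred : ℕ → Prop} [DecidablePred pred] {f : ℕ →₀ ℕ}
    (hf : f ∈ cvcarr r s pred) (n : ℕ) : f n ≤ r := by
  obtain ⟨h1, -, -⟩ := mem_cvcarr.1 hf
  by_cases hn : n ∈ f.support
  · rw [← h1, Finsupp.sum]
    exact Finset.single_le_sum (f := fun j => f j) (fun i _ => Nat.zero_le _) hn
  · simp [Finsupp.notMem_support_iff.1 hn]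

noncomputable def cvG (r s : ℕ) (pred : ℕ → Prop) [DecidablePred pred] : MvPolynomial ℕ ℚ :=
  ∑ f ∈ cvcarr r s pred, cvterm f

lemma cvterm_add {f g : ℕ →₀ ℕ} (h : Disjoint f.support g.support) :
    cvterm (f + g) = cvterm f * cvterm g := by
  have hs : (f + g).support = f.support ∪ g.support := Finsupp.support_add_eq h
  have hf : ∀ j ∈ f.support, (f + g) j = f j := fun j hj => by
    have : g j = 0 := Finsupp.notMem_support_iff.1 (Finset.disjoint_left.1 h hj)
    simp [this]
  have hg : ∀ j ∈ g.support, (f + g) j = g j := fun j hj => by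
    have : f j = 0 := Finsupp.notMem_support_iff.1 (Finset.disjoint_right.1 h hj)
    simp [this]
  have e1 : ∏ j ∈ f.support, (((f + g) j).factorial : ℚ) = ∏ j ∈ f.support, ((f j).factorial : ℚ) :=
    Finset.prod_congr rfl fun j hj => by rw [hf j hj]
  have e2 : ∏ j ∈ g.support, (((f + g) j).factorial : ℚ) = ∏ j ∈ g.support, ((g j).factorial : ℚ) :=
    Finset.prod_congr rfl fun j hj => by rw [hg j hj]
  have e3 : ∏ j ∈ f.support, (X j : MvPolynomial ℕ ℚ) ^ ((f + g) j) = ∏ j ∈ f.support, (X j : MvPolynomial ℕ ℚ) ^ f j :=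
    Finset.prod_congr rfl fun j hj => by rw [hf j hj]
  have e4 : ∏ j ∈ g.support, (X j : MvPolynomial ℕ ℚ) ^ ((f + g) j) = ∏ j ∈ g.support, (X j : MvPolynomial ℕ ℚ) ^ g j :=
    Finset.prod_congr rfl fun j hj => by rw [hg j hj]
  rw [cvterm, cvterm, cvterm, hs, Finset.prod_union h, Finset.prod_union h, e1, e2, e3, e4,
    smul_mul_smul_comm, mul_inv]

noncomputable def cvx (r s : ℕ) (pred : ℕ → Prop) [DecidablePred pred] :
    MvPolynomial ℕ ℚ :=
  ∑ b ∈ Finset.univ.filter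
      (fun b : Fin (s + 1) → Fin (r + 1) =>
        (∑ j, (b j : ℕ)) = r ∧ (∑ j : Fin (s + 1), (j : ℕ) * (b j : ℕ)) = s ∧
        ∀ j : Fin (s + 1), ¬ pred (j : ℕ) → (b j : ℕ) = 0),
    (∏ j : Fin (s + 1), ((b j : ℕ).factorial : ℚ))⁻¹ • ∏ j : Fin (s + 1), (X (j : ℕ) : MvPolynomial ℕ ℚ) ^ (b j : ℕ)

noncomputable def toF (r s : ℕ) (b : Fin (s + 1) → Fin (r + 1)) : ℕ →₀ ℕ :=
  Finsupp.onFinset (Finset.range (s+1)) (fun n => if h : n < s + 1 then (b ⟨n, h⟩ : ℕ) else 0)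
    (fun n hn => by
      rw [Finset.mem_range]
      by_contra hc
      exact hn (dif_neg hc))

lemma toF_apply_lt (r s : ℕ) (b : Fin (s + 1) → Fin (r + 1)) (n : ℕ) (h : n < s + 1) :
    toF r s b n = (b ⟨n, h⟩ : ℕ) := by
  rw [toF, Finsupp.onFinset_apply, dif_pos h]

lemma toF_apply_fin (r s : ℕ) (b : Fin (s + 1) → Fin (r + 1)) (j : Fin (s + 1)) :
    toF r s b (j : ℕ) = (b j : ℕ) := by
  rw [toF_apply_lt r s b _ j.isLt]

lemma toF_prod {M : Type*} [CommMonoid M] (r s : ℕ) (b : Fin (s + 1) → Fin (r + 1))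
    (h : ℕ → ℕ → M) (h0 : ∀ j, h j 0 = 1) :
    ∏ j ∈ (toF r s b).support, h j (toF r s b j) = ∏ j : Fin (s + 1), h (j : ℕ) (b j : ℕ) := by
  have hsub : (toF r s b).support ⊆ Finset.range (s+1) := Finsupp.support_onFinset_subset
  rw [Finset.prod_subset hsub
    (fun j _ hj => by rw [Finsupp.notMem_support_iff.1 hj, h0])]
  rw [← Fin.prod_univ_eq_prod_range (fun n => h n (toF r s b n)) (s+1)]
  exact Finset.prod_congr rfl fun j _ => by rw [toF_apply_fin]

lemma toF_sum {M : Type*} [AddCommMonoid M] (r s : ℕ) (b : Fin (s + 1) → Fin (r + 1))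
    (h : ℕ → ℕ → M) (h0 : ∀ j, h j 0 = 0) :
    (toF r s b).sum h = ∑ j : Fin (s + 1), h (j : ℕ) (b j : ℕ) :=
  toF_prod (M := Multiplicative M) r s b h h0

lemma cvx_eq_cvG (r s : ℕ) (pred : ℕ → Prop) [DecidablePred pred] :
    cvx r s pred = cvG r s pred := by
  rw [cvx, cvG]
  refine Finset.sum_nbij' (toF r s)
    (fun f (i : Fin (s + 1)) => (⟨min (f (i : ℕ)) r, by omega⟩ : Fin (r + 1)))
    ?_ ?_ ?_ ?_ ?_
  · intro b hb
    rw [Finset.mem_filter] at hb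
    obtain ⟨-, h1, h2, h3⟩ := hb
    rw [mem_cvcarr]
    refine ⟨?_, ?_, fun j hj => ?_⟩
    · rw [toF_sum r s b _ (fun _ => rfl)]; exact h1
    · rw [toF_sum r s b _ (fun j => Nat.mul_zero j)]; exact h2
    · by_cases hjs : j < s + 1
      · rw [toF_apply_lt r s b j hjs]; exact h3 ⟨j, hjs⟩ hj
      · rw [toF, Finsupp.onFinset_apply, dif_neg hjs]
  · intro f hf
    obtain ⟨h1, h2, h3⟩ := mem_cvcarr.1 hf
    have hle : ∀ n, f n ≤ r := cvcarr_apply_le hf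
    have hmin : ∀ i : Fin (s + 1), min (f (i : ℕ)) r = f (i : ℕ) := fun i => min_eq_left (hle _)
    rw [Finset.mem_filter]
    have key1 : ∑ j : Fin (s + 1), f (j : ℕ) = r := by
      rw [Fin.sum_univ_eq_sum_range (fun n => f n) (s+1)]
      exact (Finsupp.sum_of_support_subset f (cvcarr_support_subset hf) (fun _ n => n)
        (fun _ _ => rfl)).symm.trans h1
    have key2 : ∑ j : Fin (s + 1), (j : ℕ) * f (j : ℕ) = s := by
      rw [Fin.sum_univ_eq_sum_range (fun n => n * f n) (s+1)]
      exact (Finsupp.sum_of_support_subset f (cvcarr_support_subset hf) (fun j n => j * n)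
        (fun j _ => Nat.mul_zero j)).symm.trans h2
    refine ⟨Finset.mem_univ _, ?_, ?_, fun j hj => ?_⟩
    · show ∑ j : Fin (s + 1), min (f (j : ℕ)) r = r
      rw [Finset.sum_congr rfl fun i _ => hmin i]
      exact key1
    · show ∑ j : Fin (s + 1), (j : ℕ) * min (f (j : ℕ)) r = s
      rw [Finset.sum_congr rfl fun (i : Fin (s+1)) _ => by rw [hmin i]]
      exact key2
    · show min (f (j : ℕ)) r = 0
      rw [hmin j]
      exact h3 _ hj
  · intro b _
    funext i
    ext
    simp only [toF_apply_fin]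
    exact min_eq_left (Nat.lt_succ_iff.1 (b i).isLt)
  · intro f hf
    have hle : ∀ n, f n ≤ r := cvcarr_apply_le hf
    ext n
    by_cases hn : n < s + 1
    · rw [toF_apply_lt _ _ _ n hn]
      exact min_eq_left (hle n)
    · rw [toF, Finsupp.onFinset_apply, dif_neg hn]
      by_contra hc
      exact hn (Finset.mem_range.1 (cvcarr_support_subset hf (Finsupp.mem_support_iff.2 (fun h => hc h.symm))))
  · intro b _
    rw [cvterm, toF_prod r s b (fun j n => ((n).factorial : ℚ)) (fun _ => rfl),
      toF_prod r s b (fun j n => (X j : MvPolynomial ℕ ℚ) ^ n) (fun j => pow_zero _)]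

-- part C
lemma sum_count_eq_zero {f : ℕ →₀ ℕ} (h : (f.sum fun _ n => n) = 0) : f = 0 := by
  rw [Finsupp.sum] at h
  ext j
  by_cases hj : j ∈ f.support
  · have h2 : f j ≤ 0 := by
      rw [← h]
      exact Finset.single_le_sum (f := fun j => f j) (fun _ _ => Nat.zero_le _) hj
    simp only [Finsupp.coe_zero, Pi.zero_apply]
    omega
  · simpa using Finsupp.notMem_support_iff.1 hj

lemma cvG_zero (k : ℕ) (pred : ℕ → Prop) [DecidablePred pred] : cvG 0 0 pred = 1 := by
  have hcarr : cvcarr 0 0 pred = {0} := by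
    ext f
    rw [mem_cvcarr, Finset.mem_singleton]
    constructor
    · rintro ⟨h1, -, -⟩
      exact sum_count_eq_zero h1
    · rintro rfl
      simp [Finsupp.sum_zero_index]
  rw [cvG, hcarr, Finset.sum_singleton, cvterm]
  simp

lemma cvG_zero_pos (m : ℕ) (hm : 0 < m) (pred : ℕ → Prop) [DecidablePred pred] :
    cvG 0 m pred = 0 := by
  rw [cvG]
  refine Finset.sum_eq_zero fun f hf => ?_
  exfalso
  obtain ⟨h1, h2, -⟩ := mem_cvcarr.1 hf
  rw [sum_count_eq_zero h1, Finsupp.sum_zero_index] at h2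
  omega

lemma cvG_low_vanish (k a b : ℕ) (hab : (k - 1) * a < b) :
    cvG a b (fun j => j < k) = 0 := by
  rw [cvG]
  refine Finset.sum_eq_zero fun f hf => ?_
  exfalso
  obtain ⟨h1, h2, h3⟩ := mem_cvcarr.1 hf
  have hle : b ≤ (k - 1) * a := by
    rw [← h2, ← h1, Finsupp.sum, Finsupp.sum, Finset.mul_sum]
    refine Finset.sum_le_sum fun j hj => ?_
    have hjk : j < k := by
      by_contra hc
      exact Finsupp.mem_support_iff.1 hj (h3 j hc)
    exact Nat.mul_le_mul_right _ (by omega)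
  omega

lemma cvG_boundary (r s k : ℕ) :
    ∑ q ∈ Finset.range (s+1),
        cvG (r - r) (s - q) (fun j => j < k) * cvG r q (fun j => k ≤ j)
      = cvG r s (fun j => k ≤ j) := by
  rw [Finset.sum_eq_single s]
  · rw [Nat.sub_self, Nat.sub_self, cvG_zero k, one_mul]
  · intro q hq hqs
    rw [Finset.mem_range] at hq
    rw [Nat.sub_self, cvG_zero_pos (s - q) (by omega), zero_mul]
  · intro hs
    exact absurd (Finset.self_mem_range_succ s) hs

lemma hLG (k : ℕ) (f : ℕ →₀ ℕ) :
    Finsupp.filter (fun j => j < k) f + Finsupp.filter (fun j => k ≤ j) f = f := by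
  ext j
  rw [Finsupp.add_apply, Finsupp.filter_apply, Finsupp.filter_apply]
  by_cases hj : j < k
  · rw [if_pos hj, if_neg (by omega), add_zero]
  · rw [if_neg hj, if_pos (by omega), zero_add]

lemma cvG_split (r s k : ℕ) :
    cvG r s (fun _ => True) =
      ∑ p ∈ Finset.range (r+1) ×ˢ Finset.range (s+1),
        cvG (r - p.1) (s - p.2) (fun j => j < k) * cvG p.1 p.2 (fun j => k ≤ j) := by
  have hdisj : ∀ {a b c d : ℕ} {f g : ℕ →₀ ℕ}, f ∈ cvcarr a b (fun j => j < k) →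
      g ∈ cvcarr c d (fun j => k ≤ j) → Disjoint f.support g.support := by
    intro a b c d f g hf hg
    refine Finset.disjoint_left.2 fun j hjf hjg => ?_
    have h1 : j < k := by
      by_contra hc
      exact Finsupp.mem_support_iff.1 hjf ((mem_cvcarr.1 hf).2.2 j hc)
    have h2 : k ≤ j := by
      by_contra hc
      exact Finsupp.mem_support_iff.1 hjg ((mem_cvcarr.1 hg).2.2 j (by omega))
    omega
  have hterm : ∀ p ∈ Finset.range (r+1) ×ˢ Finset.range (s+1),
      cvG (r - p.1) (s - p.2) (fun j => j < k) * cvG p.1 p.2 (fun j => k ≤ j)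
      = ∑ q ∈ cvcarr (r - p.1) (s - p.2) (fun j => j < k) ×ˢ cvcarr p.1 p.2 (fun j => k ≤ j),
          cvterm (q.1 + q.2) := by
    intro p _
    rw [cvG, cvG, Finset.sum_mul_sum, ← Finset.sum_product']
    exact Finset.sum_congr rfl fun q hq =>
      (cvterm_add (hdisj (Finset.mem_product.1 hq).1 (Finset.mem_product.1 hq).2)).symm
  rw [Finset.sum_congr rfl hterm,
    Finset.sum_sigma' (Finset.range (r+1) ×ˢ Finset.range (s+1))
      (fun p => cvcarr (r - p.1) (s - p.2) (fun j => j < k) ×ˢ cvcarr p.1 p.2 (fun j => k ≤ j))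
      (fun p q => cvterm (q.1 + q.2)), cvG]
  refine Finset.sum_nbij'
    (fun f => ⟨(((Finsupp.filter (fun j => k ≤ j) f).sum fun _ n => n),
                ((Finsupp.filter (fun j => k ≤ j) f).sum fun j n => j * n)),
               (Finsupp.filter (fun j => j < k) f, Finsupp.filter (fun j => k ≤ j) f)⟩)
    (fun x => x.2.1 + x.2.2) ?_ ?_ ?_ ?_ ?_
  · -- forward membership
    intro f hf
    obtain ⟨h1, h2, -⟩ := mem_cvcarr.1 hf
    have hsum1 : ((Finsupp.filter (fun j => j < k) f).sum fun _ n => n)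
        + ((Finsupp.filter (fun j => k ≤ j) f).sum fun _ n => n) = r := by
      rw [← Finsupp.sum_add_index' (fun _ => rfl) (fun _ _ _ => rfl), hLG k f, h1]
    have hsum2 : ((Finsupp.filter (fun j => j < k) f).sum fun j n => j * n)
        + ((Finsupp.filter (fun j => k ≤ j) f).sum fun j n => j * n) = s := by
      rw [← Finsupp.sum_add_index' (fun j => Nat.mul_zero j) (fun j n1 n2 => Nat.mul_add j n1 n2),
        hLG k f, h2]
    simp only [Finset.mem_sigma, Finset.mem_product, Finset.mem_range]
    refine ⟨⟨by omega, by omega⟩, ?_, ?_⟩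
    · rw [mem_cvcarr]
      refine ⟨by omega, by omega, fun j hj => ?_⟩
      rw [Finsupp.filter_apply, if_neg hj]
    · rw [mem_cvcarr]
      refine ⟨rfl, rfl, fun j hj => ?_⟩
      rw [Finsupp.filter_apply, if_neg hj]
  · -- backward membership
    rintro ⟨⟨p1, p2⟩, ⟨f, g⟩⟩ hx
    simp only [Finset.mem_sigma, Finset.mem_product, Finset.mem_range] at hx
    obtain ⟨⟨hp1, hp2⟩, hfm, hgm⟩ := hx
    obtain ⟨hf1, hf2, -⟩ := mem_cvcarr.1 hfm
    obtain ⟨hg1, hg2, -⟩ := mem_cvcarr.1 hgm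
    rw [mem_cvcarr]
    refine ⟨?_, ?_, fun j hj => absurd trivial hj⟩
    · rw [Finsupp.sum_add_index' (fun _ => rfl) (fun _ _ _ => rfl), hf1, hg1]
      omega
    · rw [Finsupp.sum_add_index' (fun j => Nat.mul_zero j) (fun j n1 n2 => Nat.mul_add j n1 n2),
        hf2, hg2]
      omega
  · -- left inverse
    intro f hf
    dsimp only
    exact hLG k f
  · -- right inverse
    rintro ⟨⟨p1, p2⟩, ⟨f, g⟩⟩ hx
    simp only [Finset.mem_sigma, Finset.mem_product] at hx
    obtain ⟨-, hfm, hgm⟩ := hx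
    obtain ⟨hf1, hf2, hf3⟩ := mem_cvcarr.1 hfm
    obtain ⟨hg1, hg2, hg3⟩ := mem_cvcarr.1 hgm
    have hLfg : Finsupp.filter (fun j => j < k) (f + g) = f := by
      rw [Finsupp.filter_add]
      have e1 : Finsupp.filter (fun j => j < k) f = f := by
        ext j
        rw [Finsupp.filter_apply]
        by_cases hj : j < k
        · rw [if_pos hj]
        · rw [if_neg hj, hf3 j hj]
      have e2 : Finsupp.filter (fun j => j < k) g = 0 := by
        ext j
        rw [Finsupp.filter_apply]
        by_cases hj : j < k
        · rw [if_pos hj, hg3 j (by omega)]; rfl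
        · rw [if_neg hj]; rfl
      rw [e1, e2, add_zero]
    have hGfg : Finsupp.filter (fun j => k ≤ j) (f + g) = g := by
      rw [Finsupp.filter_add]
      have e1 : Finsupp.filter (fun j => k ≤ j) f = 0 := by
        ext j
        rw [Finsupp.filter_apply]
        by_cases hj : k ≤ j
        · rw [if_pos hj, hf3 j (by omega)]; rfl
        · rw [if_neg hj]; rfl
      have e2 : Finsupp.filter (fun j => k ≤ j) g = g := by
        ext j
        rw [Finsupp.filter_apply]
        by_cases hj : k ≤ j
        · rw [if_pos hj]
        · rw [if_neg hj, hg3 j hj]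
      rw [e1, e2, zero_add]
    simp only [hLfg, hGfg]
    rw [hg1, hg2]
  · -- terms agree
    intro f hf
    dsimp only
    exact congrArg cvterm (hLG k f).symm

/-- Lemma 2.3(i) of Chari–Venkatesh: for `r, s, k > 0` and `K ≥ 0` with `r+s ≥ kr+K`,
`x(r,s) = ₖx(r,s) + ∑_{(r',s')} x(r−r', s−s')_k · ₖx(r',s')`, the sum over pairs
`r' < r`, `s' ≤ s` with `r' + s' ≥ k·r' + K`. -/
theorem stmt_18 (r s k K : ℕ) (hr : 0 < r) (hs : 0 < s) (hk : 0 < k)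
    (h : r + s ≥ k * r + K) :
    cvx r s (fun _ => True) =
      cvx r s (fun j => k ≤ j) +
        ∑ x ∈ (Finset.range r ×ˢ Finset.range (s + 1)).filter
            (fun x => x.1 + x.2 ≥ k * x.1 + K),
          cvx (r - x.1) (s - x.2) (fun j => j < k) * cvx x.1 x.2 (fun j => k ≤ j) := by
  rw [cvx_eq_cvG, cvx_eq_cvG,
    Finset.sum_congr rfl (fun (x : ℕ × ℕ) _ => by
      rw [cvx_eq_cvG, cvx_eq_cvG] :
      ∀ x ∈ (Finset.range r ×ˢ Finset.range (s + 1)).filter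
          (fun x => x.1 + x.2 ≥ k * x.1 + K),
        cvx (r - x.1) (s - x.2) (fun j => j < k) * cvx x.1 x.2 (fun j => k ≤ j)
          = cvG (r - x.1) (s - x.2) (fun j => j < k) * cvG x.1 x.2 (fun j => k ≤ j))]
  rw [cvG_split r s k, Finset.sum_product, Finset.sum_range_succ, cvG_boundary r s k,
    add_comm]
  congr 1
  dsimp only
  rw [← Finset.sum_product']
  rw [← Finset.sum_filter_add_sum_filter_not (Finset.range r ×ˢ Finset.range (s+1))
    (fun x => x.1 + x.2 ≥ k * x.1 + K)
    (fun x => cvG (r - x.1) (s - x.2) (fun j => j < k) * cvG x.1 x.2 (fun j => k ≤ j))]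
  have hz : ∑ x ∈ (Finset.range r ×ˢ Finset.range (s+1)).filter
      (fun x => ¬ (x.1 + x.2 ≥ k * x.1 + K)),
      cvG (r - x.1) (s - x.2) (fun j => j < k) * cvG x.1 x.2 (fun j => k ≤ j) = 0 := by
    refine Finset.sum_eq_zero fun x hx => ?_
    rw [Finset.mem_filter, Finset.mem_product, Finset.mem_range, Finset.mem_range] at hx
    obtain ⟨⟨hx1, hx2⟩, hxK⟩ := hx
    have hvan : (k - 1) * (r - x.1) < s - x.2 := by
      by_contra hc
      push_neg at hc
      have e1 : (k - 1) * (r - x.1) + (r - x.1) = k * (r - x.1) := by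
        obtain ⟨n, rfl⟩ : ∃ n, k = n + 1 := ⟨k - 1, by omega⟩
        rw [Nat.add_sub_cancel, Nat.add_mul, Nat.one_mul]
      have e2 : k * x.1 + k * (r - x.1) = k * r := by
        rw [← Nat.mul_add]
        congr 1
        omega
      -- linear arithmetic in the atoms (k-1)*(r-x.1), k*(r-x.1), k*x.1, k*r
      have h3 : (s - x.2) + (r - x.1) ≤ k * (r - x.1) := by omega
      have h4 : x.2 ≤ s := by omega
      omega
    rw [cvG_low_vanish k _ _ hvan, zero_mul]
  rw [hz, add_zero]
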